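/- Let d ≥ 3, R_0 > 0 and let φ : [R_0, ∞) → (0, ∞) be a decreasing function. Suppose (c_n) is a sequence of points in ℝ^d with ‖c_n - c_m‖ ≥ 2ε (n ≠ m, ε > 0) such that every ball B(x, R) in ℝ^d \ B(0, R_0) contains at least one c_n (R > 0 fixed). Then ∑_n φ(‖c_n‖)^{d-2} / ‖c_n‖^{d-2} < ∞ if and only if ∫_{R_0}^∞ r φ(r)^{d-2} dr < ∞. -/

import Mathlib

/-!
Regularly located centres behave like a lattice: the balls `B(c n, ε)` are disjoint and the balls
`B(c n, R)` cover the exterior of `B(0, R₀)`. Since the profile `g t = φ(t)^{d-2} / t^{d-2}`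
(frozen at its value at `R₀` below `R₀`) is decreasing, comparing `g ‖c n‖` with `g` on these
balls bounds `∑ g ‖c n‖` above and below by integrals over `ℝ^d` of shifted profiles
`x ↦ g (‖x‖ + a)`. A shift does not affect the integrability of a decreasing radial profile: away
from a ball it is squeezed between `g (2‖x‖)` and `g (‖x‖ / 2)`, which are integrable together with
`g ‖x‖` by scaling. Polar coordinates then turn `∫ g ‖x‖ dx` into
`∫ t^{d-1} g t dt = ∫ t φ(t)^{d-2} dt`.
-/

open MeasureTheory Set Metric
open scoped ENNReal

lemma antitone_comp_max_of_antitoneOn {α β : Type*} [LinearOrder α] [Preorder β] {f : α → β}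
    {a : α} (hf : AntitoneOn f (Ici a)) : Antitone fun t => f (max t a) := fun s t hst =>
  hf (mem_Ici.2 (le_max_right s a)) (mem_Ici.2 (le_max_right t a)) (max_le_max hst le_rfl)

lemma antitoneOn_pow_div_pow {φ : ℝ → ℝ} {a : ℝ} (ha : 0 < a) (hφ : AntitoneOn φ (Ici a))
    (hφ0 : ∀ t, a ≤ t → 0 ≤ φ t) (m : ℕ) : AntitoneOn (fun t => φ t ^ m / t ^ m) (Ici a) :=
  fun s hs t ht hst =>
    div_le_div₀ (pow_nonneg (hφ0 s hs) m) (pow_le_pow_left₀ (hφ0 t ht) (hφ hs ht hst) m)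
      (pow_pos (ha.trans_le hs) m) (pow_le_pow_left₀ (ha.le.trans hs) hst m)

lemma integrableOn_pow_mul_Ioi_zero_iff_Ici {g : ℝ → ℝ} (hg : Antitone g) (hg0 : ∀ t, 0 ≤ g t)
    (k : ℕ) {a : ℝ} (ha : 0 < a) :
    IntegrableOn (fun t => t ^ k * g t) (Ioi 0) ↔ IntegrableOn (fun t => t ^ k * g t) (Ici a) := by
  refine ⟨fun h => h.mono_set (Ici_subset_Ioi.2 ha), fun h => ?_⟩
  rw [← Ioc_union_Ici_eq_Ioi ha]
  refine IntegrableOn.union ?_ h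
  have hbound : ∀ t ∈ Ioc 0 a, ‖t ^ k * g t‖ ≤ a ^ k * g 0 := fun t ht => by
    rw [Real.norm_of_nonneg (mul_nonneg (pow_nonneg ht.1.le k) (hg0 t))]
    exact mul_le_mul (pow_le_pow_left₀ ht.1.le ht.2 k) (hg ht.1.le) (hg0 t) (pow_nonneg ha.le k)
  exact (integrableOn_const (C := a ^ k * g 0) measure_Ioc_lt_top.ne).mono'
    ((measurable_id.pow_const k).mul hg.measurable).aestronglyMeasurable
    (ae_restrict_of_forall_mem measurableSet_Ioc hbound)

section RadialProfile

variable {E : Type*} [NormedAddCommGroup E] [MeasurableSpace E] [BorelSpace E]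
  {μ : Measure E} [μ.IsAddHaarMeasure]
  {ι : Type*} [Countable ι] {c : ι → E}

lemma tsum_mul_measure_ball_le_lintegral {G : ℝ → ℝ≥0∞} (hG : Antitone G) {ε : ℝ}
    (hsep : Pairwise fun n m => 2 * ε ≤ ‖c n - c m‖) :
    (∑' n, G ‖c n‖) * μ (ball 0 ε) ≤ ∫⁻ x, G (‖x‖ - ε) ∂μ :=
  calc (∑' n, G ‖c n‖) * μ (ball 0 ε) = ∑' n, ∫⁻ _ in ball (c n) ε, G ‖c n‖ ∂μ := by
        simp only [← ENNReal.tsum_mul_right, setLIntegral_const, Measure.addHaar_ball_center]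
    _ ≤ ∑' n, ∫⁻ x in ball (c n) ε, G (‖x‖ - ε) ∂μ := by
        refine ENNReal.tsum_le_tsum fun n => setLIntegral_mono
          (hG.measurable.comp (measurable_norm.sub_const ε)) fun x hx => hG ?_
        rw [mem_ball, dist_eq_norm] at hx
        linarith [norm_sub_norm_le x (c n)]
    _ = ∫⁻ x in ⋃ n, ball (c n) ε, G (‖x‖ - ε) ∂μ := by
        refine (lintegral_iUnion (fun _ => measurableSet_ball) (fun n m hnm => ?_) _).symm
        exact ball_disjoint_ball (by rw [dist_eq_norm]; linarith [hsep hnm])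
    _ ≤ ∫⁻ x, G (‖x‖ - ε) ∂μ := setLIntegral_le_lintegral _ _

lemma setLIntegral_le_tsum_mul_measure_ball {G : ℝ → ℝ≥0∞} (hG : Antitone G) {r : ℝ}
    {s : Set E} (hs : s ⊆ ⋃ n, ball (c n) r) :
    ∫⁻ x in s, G (‖x‖ + r) ∂μ ≤ (∑' n, G ‖c n‖) * μ (ball 0 r) :=
  calc ∫⁻ x in s, G (‖x‖ + r) ∂μ ≤ ∫⁻ x in ⋃ n, ball (c n) r, G (‖x‖ + r) ∂μ :=
        lintegral_mono_set hs
    _ ≤ ∑' n, ∫⁻ x in ball (c n) r, G (‖x‖ + r) ∂μ := lintegral_iUnion_le _ _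
    _ ≤ ∑' n, ∫⁻ _ in ball (c n) r, G ‖c n‖ ∂μ := by
        refine ENNReal.tsum_le_tsum fun n => setLIntegral_mono measurable_const fun x hx => hG ?_
        rw [mem_ball, dist_eq_norm] at hx
        linarith [norm_sub_norm_le (c n) x, norm_sub_rev x (c n)]
    _ = (∑' n, G ‖c n‖) * μ (ball 0 r) := by
        simp only [← ENNReal.tsum_mul_right, setLIntegral_const, Measure.addHaar_ball_center]

variable [NormedSpace ℝ E] [FiniteDimensional ℝ E] {g : ℝ → ℝ}

lemma integrable_comp_norm_add_of_antitone (hg : Antitone g) (hg0 : ∀ t, 0 ≤ g t)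
    (h : Integrable (fun x => g ‖x‖) μ) (a : ℝ) : Integrable (fun x => g (‖x‖ + a)) μ := by
  have hdom : Integrable (fun x => (closedBall (0 : E) (2 * |a|)).indicator (fun _ => g (-|a|)) x
      + g ‖(2⁻¹ : ℝ) • x‖) μ :=
    ((integrableOn_const measure_closedBall_lt_top.ne).integrable_indicator
      measurableSet_closedBall).add (h.comp_smul (by norm_num))
  refine hdom.mono' (hg.measurable.comp (measurable_norm.add_const a)).aestronglyMeasurable
    (.of_forall fun x => ?_)
  rw [Real.norm_of_nonneg (hg0 _)]
  by_cases hx : ‖x‖ ≤ 2 * |a|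
  · simp only [indicator_of_mem (mem_closedBall_zero_iff.2 hx)]
    linarith [hg (show -|a| ≤ ‖x‖ + a by linarith [neg_abs_le a, norm_nonneg x]),
      hg0 ‖(2⁻¹ : ℝ) • x‖]
  · rw [indicator_of_notMem (by simpa using hx), zero_add, norm_smul]
    refine hg ?_
    rw [Real.norm_of_nonneg (by norm_num)]
    linarith [neg_abs_le a]

lemma integrable_comp_norm_of_integrableOn_compl_ball (hg : Antitone g) (hg0 : ∀ t, 0 ≤ g t)
    {a r : ℝ} (h : IntegrableOn (fun x => g (‖x‖ + a)) (ball 0 r)ᶜ μ) :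
    Integrable (fun x => g ‖x‖) μ := by
  rw [← integrable_comp_smul_iff μ (fun x => g ‖x‖) two_ne_zero]
  have hdom : Integrable (fun x => (ball (0 : E) (max r |a|)).indicator (fun _ => g 0) x
      + (ball 0 r)ᶜ.indicator (fun x => g (‖x‖ + a)) x) μ :=
    ((integrableOn_const measure_ball_lt_top.ne).integrable_indicator measurableSet_ball).add
      (h.integrable_indicator measurableSet_ball.compl)
  refine hdom.mono'
    (hg.measurable.comp (measurable_norm.comp (measurable_id.const_smul 2))).aestronglyMeasurable
    (.of_forall fun x => ?_)
  rw [Real.norm_of_nonneg (hg0 _), norm_smul, Real.norm_two]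
  by_cases hx : ‖x‖ < max r |a|
  · simp only [indicator_of_mem (mem_ball_zero_iff.2 hx)]
    have : 0 ≤ (ball 0 r)ᶜ.indicator (fun x => g (‖x‖ + a)) x :=
      indicator_nonneg (fun _ _ => hg0 _) x
    linarith [hg (by positivity : (0 : ℝ) ≤ 2 * ‖x‖)]
  · obtain ⟨hrx, hax⟩ := max_le_iff.1 (not_lt.1 hx)
    rw [indicator_of_notMem (by simpa using hx), zero_add,
      indicator_of_mem (by simpa using hrx)]
    exact hg (by linarith [le_abs_self a])

theorem summable_comp_norm_iff_integrable (hg : Antitone g) (hg0 : ∀ t, 0 ≤ g t) {ε r R : ℝ}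
    (hε : 0 < ε) (hsep : Pairwise fun n m => 2 * ε ≤ ‖c n - c m‖)
    (hdense : ∀ x : E, r ≤ ‖x‖ → ∃ n, ‖x - c n‖ < R) :
    Summable (fun n => g ‖c n‖) ↔ Integrable (fun x => g ‖x‖) μ := by
  have hG : Antitone fun t => ENNReal.ofReal (g t) := fun _ _ hst =>
    ENNReal.ofReal_le_ofReal (hg hst)
  have hlintegral (ν : Measure E) (a : ℝ) :
      ∫⁻ x, ENNReal.ofReal (g (‖x‖ + a)) ∂ν ≠ ⊤ ↔ Integrable (fun x => g (‖x‖ + a)) ν :=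
    lintegral_ofReal_ne_top_iff_integrable
      (hg.measurable.comp (measurable_norm.add_const a)).aestronglyMeasurable
      (.of_forall fun _ => hg0 _)
  constructor
  · intro hsum
    have hcover : (ball (0 : E) r)ᶜ ⊆ ⋃ n, ball (c n) R := fun x hx => by
      obtain ⟨n, hn⟩ := hdense x (by simpa using hx)
      exact mem_iUnion.2 ⟨n, by rwa [mem_ball, dist_eq_norm]⟩
    refine integrable_comp_norm_of_integrableOn_compl_ball hg hg0 (a := R) (r := r) ?_
    exact (hlintegral _ R).1 <| ne_top_of_le_ne_top
      (ENNReal.mul_ne_top hsum.tsum_ofReal_ne_top measure_ball_lt_top.ne)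
      (setLIntegral_le_tsum_mul_measure_ball hG hcover)
  · intro hint
    have hfin : ∫⁻ x, ENNReal.ofReal (g (‖x‖ - ε)) ∂μ ≠ ⊤ := by
      simpa only [← sub_eq_add_neg] using
        (hlintegral μ (-ε)).2 (integrable_comp_norm_add_of_antitone hg hg0 hint (-ε))
    have hS : ∑' n, ENNReal.ofReal (g ‖c n‖) ≠ ⊤ := fun htop => by
      refine ne_top_of_le_ne_top hfin (tsum_mul_measure_ball_le_lintegral (μ := μ) hG hsep) ?_
      rw [htop, ENNReal.top_mul (measure_ball_pos μ 0 hε).ne']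
    exact (ENNReal.summable_toReal hS).congr fun n => ENNReal.toReal_ofReal (hg0 _)

end RadialProfile

theorem sum_integral_comparison_general (d : ℕ) (hd : 3 ≤ d) (R₀ ε R : ℝ)
    (hR₀ : 0 < R₀) (hε : 0 < ε)
    (φ : ℝ → ℝ) (hφmono : AntitoneOn φ (Set.Ici R₀))
    (hφpos : ∀ t, R₀ ≤ t → 0 < φ t)
    (c : ℕ → EuclideanSpace ℝ (Fin d))
    (hout : ∀ n, R₀ ≤ ‖c n‖)
    (hsep : ∀ n m, n ≠ m → 2 * ε ≤ ‖c n - c m‖)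
    (hdense : ∀ x : EuclideanSpace ℝ (Fin d), R₀ ≤ ‖x‖ → ∃ n, ‖x - c n‖ < R) :
    Summable (fun n => φ ‖c n‖ ^ (d - 2) / ‖c n‖ ^ (d - 2)) ↔
      IntegrableOn (fun t => t * φ t ^ (d - 2)) (Set.Ici R₀) := by
  set g : ℝ → ℝ := fun t => φ (max t R₀) ^ (d - 2) / max t R₀ ^ (d - 2)
  have hg : Antitone g := antitone_comp_max_of_antitoneOn
    (antitoneOn_pow_div_pow hR₀ hφmono (fun t ht => (hφpos t ht).le) (d - 2))
  have hg0 (t : ℝ) : 0 ≤ g t := div_nonneg (pow_nonneg (hφpos _ (le_max_right t R₀)).le _)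
    (pow_nonneg (hR₀.le.trans (le_max_right t R₀)) _)
  have : Nontrivial (EuclideanSpace ℝ (Fin d)) :=
    Module.nontrivial_of_finrank_pos (R := ℝ) (by rw [finrank_euclideanSpace_fin]; omega)
  calc Summable (fun n => φ ‖c n‖ ^ (d - 2) / ‖c n‖ ^ (d - 2))
      ↔ Summable (fun n => g ‖c n‖) := by simp only [g, max_eq_left (hout _)]
    _ ↔ Integrable (fun x : EuclideanSpace ℝ (Fin d) => g ‖x‖) :=
      summable_comp_norm_iff_integrable hg hg0 hε hsep hdense
    _ ↔ IntegrableOn (fun t => t ^ (d - 1) * g t) (Ioi 0) := by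
      simpa [finrank_euclideanSpace_fin] using
        integrable_fun_norm_addHaar (volume : Measure (EuclideanSpace ℝ (Fin d))) (f := g)
    _ ↔ IntegrableOn (fun t => t ^ (d - 1) * g t) (Ici R₀) :=
      integrableOn_pow_mul_Ioi_zero_iff_Ici hg hg0 _ hR₀
    _ ↔ _ := by
      refine integrableOn_congr_fun (fun t ht => ?_) measurableSet_Ici
      have ht0 : 0 < t := hR₀.trans_le ht
      simp only [g, max_eq_left (mem_Ici.1 ht)]
      rw [show d - 1 = (d - 2) + 1 by omega, pow_succ]
      field_simp

/-- For a `2ε`-separated, `R`-dense ("regularly located") sequence of centres outside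
`B(0,R₀)` and a decreasing positive function `φ`, the sum `∑ φ(‖c n‖)^{d-2}/‖c n‖^{d-2}`
is finite if and only if `∫_{R₀}^∞ r φ(r)^{d-2} dr` is finite. -/
theorem sum_integral_comparison (d : ℕ) (hd : 3 ≤ d) (R₀ ε R : ℝ)
    (hR₀ : 0 < R₀) (hε : 0 < ε) (hR : 0 < R)
    (φ : ℝ → ℝ) (hφmono : AntitoneOn φ (Set.Ici R₀))
    (hφpos : ∀ t, R₀ ≤ t → 0 < φ t)
    (c : ℕ → EuclideanSpace ℝ (Fin d))
    (hout : ∀ n, R₀ ≤ ‖c n‖)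
    (hsep : ∀ n m, n ≠ m → 2 * ε ≤ ‖c n - c m‖)
    (hdense : ∀ x : EuclideanSpace ℝ (Fin d), R₀ ≤ ‖x‖ → ∃ n, ‖x - c n‖ < R) :
    Summable (fun n => φ ‖c n‖ ^ (d - 2) / ‖c n‖ ^ (d - 2)) ↔
      IntegrableOn (fun t => t * φ t ^ (d - 2)) (Set.Ici R₀) :=
  sum_integral_comparison_general d hd R₀ ε R hR₀ hε φ hφmono hφpos c hout hsep hdense
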